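/- arXiv:2206.03435 — 2 statements merged into one kernel-verified Lean document; each statement's English description precedes it below -/
import Mathlib

section
/- Let k, m, n be nonnegative integers with m odd, k+m ≤ n, Z an n×(k+m) matrix with positive maximal minors, C a k×n matrix with positive maximal minors, Y = CZ. Then for any list I = (i_1, i_1+1, ..., i_{(m−1)/2}, i_{(m−1)/2}+1) of m−1 strictly increasing integers in [2, n], we have (−1)^k ⟨Y, 1, I⟩ > 0; and for any such list I with entries in [1, n−1], we have ⟨Y, I, n⟩ > 0. -/
/-- Twistor coordinate. -/
noncomputable def twistor {k m n : ℕ} (Z : Matrix (Fin n) (Fin (k + m)) ℝ)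
    (Y : Matrix (Fin k) (Fin (k + m)) ℝ) (L : Fin m → Fin n) : ℝ :=
  Matrix.det (Matrix.of fun i j : Fin k ⊕ Fin m =>
    Sum.elim (fun a => Y a) (fun b => Z (L b)) i (finSumFinEquiv j))

def PosMaximalMinors {n p : ℕ} (Z : Matrix (Fin n) (Fin p) ℝ) : Prop :=
  ∀ f : Fin p → Fin n, StrictMono f → 0 < Matrix.det (Matrix.of fun a b => Z (f a) b)

def PosRowMinors {k n : ℕ} (C : Matrix (Fin k) (Fin n) ℝ) : Prop :=
  ∀ g : Fin k → Fin n, StrictMono g → 0 < Matrix.det (Matrix.of fun a b => C a (g b))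

def ConsecPairs {m n : ℕ} (I : Fin m → Fin n) : Prop :=
  ∀ a b : Fin m, (a : ℕ) + 1 = (b : ℕ) → (a : ℕ) % 2 = 0 → (I b : ℕ) = (I a : ℕ) + 1

/-!
Expanding the `k` rows of `Y = C Z` multilinearly and grouping the terms by the sorted row
sets (a Cauchy–Binet expansion) gives `⟨Y, L⟩ = ∑_S det C_S · det [Z_S; Z_L]`, the sum over
increasing `k`-tuples `S`. A term vanishes unless `S` avoids `L`, and then sorting the rows of
`[Z_S; Z_L]` shows that it has the sign `∏_{a,b} ε(S_a, L_b)`, where `ε(x, y)` is `1` if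
`x < y` and `-1` otherwise. For `L = (1, I)` the row `1` lies below every `S_a` and contributes
`(-1)^k`, for `L = (I, n)` the row `n` contributes nothing, and the rows `i, i + 1` of each pair
of `I` contribute equal signs since no `S_a` lies between them. Hence all nonzero terms have the
claimed sign, and some term is nonzero because `k + m ≤ n`.
-/

open Finset Equiv Matrix

namespace Matrix

variable {R : Type*} [CommRing R]

theorem det_mul_eq_sum_prod_mul_det_submatrix {ι κ : Type*} [Fintype ι] [DecidableEq ι]
    [Fintype κ] (B : Matrix ι κ R) (Z : Matrix κ ι R) :
    (B * Z).det = ∑ p : ι → κ, (∏ i, B i (p i)) * (Z.submatrix p id).det := by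
  have hrows : B * Z = Matrix.of fun i => ∑ x, B i x • Z x := by
    ext i j; simp [mul_apply, Finset.sum_apply]
  rw [hrows]
  let d : (ι → R) [⋀^ι]→ₗ[R] R := detRowAlternating
  change d (fun i => ∑ x, B i x • Z x) =
    ∑ p : ι → κ, (∏ i, B i (p i)) * d (fun i => Z (p i))
  exact (d.toMultilinearMap.map_sum fun i x => B i x • Z x).trans
    (Fintype.sum_congr _ _ fun p => d.toMultilinearMap.map_smul_univ _ _)

theorem det_submatrix_eq_zero_of_not_injective {ι κ ν : Type*} [Fintype ι] [DecidableEq ι]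
    (Z : Matrix κ ν R) {p : ι → κ} (e : ι → ν) (hp : ¬ Function.Injective p) :
    (Z.submatrix p e).det = 0 := by
  obtain ⟨i, j, hij, hne⟩ := Function.not_injective_iff.1 hp
  exact det_zero_of_row_eq hne (by ext; simp [hij])

theorem det_submatrix_id_eq_sum_perm {k : ℕ} {α : Type*} (C : Matrix (Fin k) α R)
    (s : Fin k → α) :
    (C.submatrix id s).det = ∑ τ : Perm (Fin k), (Perm.sign τ : R) * ∏ a, C a (s (τ a)) := by
  rw [← det_transpose, det_apply]
  simp [Units.smul_def]

theorem sum_prod_mul_eq_sum_strictMono_det {k : ℕ} {α : Type*} [LinearOrder α] [Fintype α]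
    (C : Matrix (Fin k) α R) (D : (Fin k → α) → R)
    (hperm : ∀ g (τ : Perm (Fin k)), D (g ∘ τ) = Perm.sign τ * D g)
    (hzero : ∀ g, ¬ Function.Injective g → D g = 0) :
    ∑ g, (∏ a, C a (g a)) * D g = ∑ s with StrictMono s, (C.submatrix id s).det * D s := by
  classical
  set S := univ.filter fun s : Fin k → α => StrictMono s
  set P : Finset ((Fin k → α) × Perm (Fin k)) := S ×ˢ univ
  have hinjOn : Set.InjOn (fun p : (Fin k → α) × Perm (Fin k) => p.1 ∘ p.2) P := by
    rintro ⟨s, τ⟩ hs ⟨s', τ'⟩ hs' h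
    simp only [coe_product, coe_filter, mem_univ, true_and, coe_univ, Set.mem_prod,
      Set.mem_ofPred_eq, Set.mem_univ, and_true, P, S] at hs hs' h
    obtain rfl : s = s' := (hs.range_inj hs').1 <| by
      rw [← τ.surjective.range_comp, h, τ'.surjective.range_comp]
    exact Prod.ext rfl (Equiv.ext fun a => hs.injective (congrFun h a))
  have himage : ∀ g, Function.Injective g → g ∈ P.image fun p => p.1 ∘ p.2 := by
    intro g hg
    refine mem_image.2 ⟨(g ∘ Tuple.sort g, (Tuple.sort g)⁻¹), ?_, ?_⟩
    · simpa [P, S] using (Tuple.monotone_sort g).strictMono_of_injective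
        (hg.comp (Tuple.sort g).injective)
    · ext a; simp
  symm
  calc ∑ s ∈ S, (C.submatrix id s).det * D s
      = ∑ p ∈ P, (∏ a, C a ((p.1 ∘ p.2) a)) * D (p.1 ∘ p.2) := by
        rw [sum_product]
        refine sum_congr rfl fun s _ => ?_
        rw [det_submatrix_id_eq_sum_perm, sum_mul]
        exact sum_congr rfl fun τ _ => by rw [hperm]; simp only [Function.comp_apply]; ring
    _ = ∑ g ∈ P.image (fun p => p.1 ∘ p.2), (∏ a, C a (g a)) * D g :=
        (sum_image (f := fun g => (∏ a, C a (g a)) * D g) hinjOn).symm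
    _ = ∑ g, (∏ a, C a (g a)) * D g :=
        sum_subset (subset_univ _) fun g _ hg => by
          rw [hzero g (mt (himage g) hg), mul_zero]

end Matrix

def inversionSign {N : ℕ} {α : Type*} [LinearOrder α] (t : Fin N → α) : ℤˣ :=
  ∏ i, ∏ j ∈ Ioi i, if t i < t j then 1 else -1

section InversionSign

variable {N : ℕ} {α β : Type*} [LinearOrder α] [LinearOrder β]

theorem inversionSign_perm (σ : Perm (Fin N)) : inversionSign σ = Perm.sign σ :=
  σ.sign_eq_prod_prod_Ioi.symm

theorem StrictMono.inversionSign_comp {u : α → β} (hu : StrictMono u) (t : Fin N → α) :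
    inversionSign (u ∘ t) = inversionSign t := by
  simp [inversionSign, hu.lt_iff_lt]

theorem inversionSign_append {k M : ℕ} {s : Fin k → α} {L : Fin M → α} (hs : StrictMono s)
    (hL : StrictMono L) :
    inversionSign (Fin.append s L) = ∏ a, ∏ b, if s a < L b then 1 else -1 := by
  have hlr (a : Fin k) (b : Fin M) : Fin.castAdd M a < Fin.natAdd k b := Nat.lt_add_right _ a.2
  have hll (a a' : Fin k) : Fin.castAdd M a < Fin.castAdd M a' ↔ a < a' := Iff.rfl
  simp +contextual [inversionSign, ← filter_lt_eq_Ioi, prod_filter, Fin.prod_univ_add, hll, hlr,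
    (hlr _ _).not_gt, hs.lt_iff_lt, hL.lt_iff_lt]

theorem Matrix.det_submatrix_eq_inversionSign_mul {R κ : Type*} [CommRing R] [LinearOrder κ]
    (Z : Matrix κ (Fin N) R) {t : Fin N → κ} (ht : Function.Injective t) :
    ∃ u : Fin N → κ, StrictMono u ∧
      (Z.submatrix t id).det = inversionSign t * (Z.submatrix u id).det := by
  set σ := Tuple.sort t
  have hu : StrictMono (t ∘ σ) :=
    (Tuple.monotone_sort t).strictMono_of_injective (ht.comp σ.injective)
  refine ⟨t ∘ σ, hu, ?_⟩
  have hsort : (t ∘ σ) ∘ ⇑σ⁻¹ = t := by ext; simp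
  have hsub : Z.submatrix t id = (Z.submatrix (t ∘ σ) id).submatrix ⇑σ⁻¹ id := by
    rw [submatrix_submatrix, hsort, Function.id_comp]
  rw [hsub, det_permute, ← inversionSign_perm, ← hu.inversionSign_comp, hsort]

end InversionSign

theorem prod_eq_one_of_pairs {m : ℕ} (hm : Even m) (f : Fin m → ℤˣ)
    (hf : ∀ a b : Fin m, (a : ℕ) + 1 = b → (a : ℕ) % 2 = 0 → f b = f a) :
    ∏ b, f b = 1 := by
  induction m using Nat.twoStepInduction with
  | zero => simp
  | one => exact absurd hm Nat.not_even_one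
  | more m ih _ =>
    have hm' : Even m := (Nat.even_add.1 hm).2 even_two
    rw [Fin.prod_univ_castSucc, Fin.prod_univ_castSucc, ih hm' _ fun a b hab ha => hf _ _ hab ha,
      hf (Fin.last m).castSucc (Fin.last (m + 1)) rfl (by simpa using Nat.even_iff.1 hm'),
      one_mul, Int.units_mul_self]

namespace ConsecPairs

variable {m n : ℕ} {I : Fin m → Fin n}

theorem prod_sign_lt_eq_one (hI : ConsecPairs I) (hm : Even m) {x : Fin n}
    (hx : ∀ b, x ≠ I b) : ∏ b, (if x < I b then 1 else -1 : ℤˣ) = 1 := by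
  refine prod_eq_one_of_pairs hm _ fun a b hab ha => ?_
  have hIab : (I b : ℕ) = I a + 1 := hI a b hab ha
  have hxa : (x : ℕ) ≠ I a := fun h => hx a (Fin.ext h)
  have hiff : x < I b ↔ x < I a := by rw [Fin.lt_def, Fin.lt_def]; omega
  simp only [hiff]

theorem prod_sign_lt_cons_zero (hI : ConsecPairs I) (hm : Even m) (hn : 0 < n) {x : Fin n}
    (hx : ∀ b, x ≠ (Fin.cons ⟨0, hn⟩ I : Fin (m + 1) → Fin n) b) :
    ∏ b, (if x < (Fin.cons ⟨0, hn⟩ I : Fin (m + 1) → Fin n) b then 1 else -1 : ℤˣ) =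
      -1 := by
  rw [Fin.prod_univ_succ, Fin.cons_zero, if_neg (by simp [Fin.lt_def]), neg_one_mul]
  simp only [Fin.cons_succ]
  rw [hI.prod_sign_lt_eq_one hm fun b => by simpa using hx b.succ]

theorem prod_sign_lt_snoc_last (hI : ConsecPairs I) (hm : Even m) (hn : n - 1 < n) {x : Fin n}
    (hx : ∀ b, x ≠ (Fin.snoc I ⟨n - 1, hn⟩ : Fin (m + 1) → Fin n) b) :
    ∏ b, (if x < (Fin.snoc I ⟨n - 1, hn⟩ : Fin (m + 1) → Fin n) b then 1 else -1 : ℤˣ) =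
      1 := by
  have hlast : (x : ℕ) ≠ n - 1 := fun h => hx (Fin.last m) (by simpa using Fin.ext h)
  have hlt : x < ⟨n - 1, hn⟩ := Fin.lt_def.2 (by have := x.isLt; show (x : ℕ) < n - 1; omega)
  rw [Fin.prod_univ_castSucc, Fin.snoc_last, if_pos hlt, mul_one]
  simp only [Fin.snoc_castSucc]
  exact hI.prod_sign_lt_eq_one hm fun b => by simpa using hx b.castSucc

end ConsecPairs

theorem strictMono_snoc_of_lt {m n : ℕ} {I : Fin m → Fin n} (hI : StrictMono I) {x : Fin n}
    (hx : ∀ j, I j < x) : StrictMono (Fin.snoc I x : Fin (m + 1) → Fin n) := by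
  rw [← Fin.insertNth_last', Fin.strictMono_insertNth_iff]
  exact ⟨hI, fun j _ => hx j, fun j hj => absurd hj (Fin.castSucc_lt_last j).not_ge⟩

section Twistor

variable {k M n : ℕ}

theorem twistor_eq_det_fromRows (Z : Matrix (Fin n) (Fin (k + M)) ℝ)
    (Y : Matrix (Fin k) (Fin (k + M)) ℝ) (L : Fin M → Fin n) :
    twistor Z Y L =
      (fromRows (Y.submatrix id finSumFinEquiv) (Z.submatrix L finSumFinEquiv)).det := by
  unfold twistor
  congr
  ext (a | b) j <;> rfl

theorem twistor_mul_eq_sum (Z : Matrix (Fin n) (Fin (k + M)) ℝ) (C : Matrix (Fin k) (Fin n) ℝ)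
    (L : Fin M → Fin n) :
    twistor Z (C * Z) L = ∑ s with StrictMono s,
      (C.submatrix id s).det * (Z.submatrix (Sum.elim s L) finSumFinEquiv).det := by
  classical
  set Z' := Z.submatrix id finSumFinEquiv
  set E : Matrix (Fin M) (Fin n) ℝ := Matrix.of fun b x => if L b = x then 1 else 0
  have hrows : fromRows ((C * Z).submatrix id finSumFinEquiv) (Z.submatrix L finSumFinEquiv) =
      fromRows C E * Z' := by
    rw [fromRows_mul]
    congr 1
    ext; simp [Z', E, mul_apply]
  have hselect (F : (Fin M → Fin n) → ℝ) : ∑ h, (∏ b, E b (h b)) * F h = F L := by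
    simp [E, prod_boole, ← funext_iff, eq_comm]
  rw [twistor_eq_det_fromRows, hrows, det_mul_eq_sum_prod_mul_det_submatrix,
    ← (Equiv.sumArrowEquivProdArrow _ _ _).symm.sum_comp, Fintype.sum_prod_type]
  simp only [Fintype.prod_sum_type, sumArrowEquivProdArrow_symm_apply_inl,
    sumArrowEquivProdArrow_symm_apply_inr, fromRows_apply_inl, fromRows_apply_inr, mul_assoc,
    ← mul_sum, hselect]
  refine sum_prod_mul_eq_sum_strictMono_det C
    (fun g => (Z.submatrix (Sum.elim g L) finSumFinEquiv).det) ?_ ?_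
  · intro g τ
    have hperm : Z.submatrix (Sum.elim (g ∘ τ) L) finSumFinEquiv =
        (Z.submatrix (Sum.elim g L) finSumFinEquiv).submatrix (τ.sumCongr (Equiv.refl _)) id := by
      ext (a | b) j <;> rfl
    rw [hperm, det_permute, Perm.sign_sumCongr, Perm.sign_refl, mul_one]
  · exact fun g hg => det_submatrix_eq_zero_of_not_injective _ _
      (mt (fun h => (Sum.elim_injective.1 h).1) hg)

theorem exists_strictMono_forall_ne (L : Fin M → Fin n) (h : k + M ≤ n) :
    ∃ s : Fin k → Fin n, StrictMono s ∧ ∀ a b, s a ≠ L b := by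
  classical
  have hcard : k ≤ ((univ.image L)ᶜ : Finset (Fin n)).card := by
    rw [card_compl, Fintype.card_fin]
    have := (card_image_le (s := univ) (f := L)).trans_eq (card_fin M)
    omega
  refine ⟨_, (orderEmbOfCardLe _ hcard).strictMono, fun a b hab => ?_⟩
  exact mem_compl.1 (orderEmbOfCardLe_mem _ hcard a) (hab ▸ mem_image_of_mem L (mem_univ b))

theorem PosMaximalMinors.inversionSign_mul_det_pos {N : ℕ} {Z : Matrix (Fin n) (Fin N) ℝ}
    (hZ : PosMaximalMinors Z) {t : Fin N → Fin n} (ht : Function.Injective t) :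
    0 < (inversionSign t : ℝ) * (Z.submatrix t id).det := by
  obtain ⟨u, hu, h⟩ := det_submatrix_eq_inversionSign_mul Z ht
  rw [h, ← mul_assoc, ← Int.cast_mul, ← Units.val_mul, Int.units_mul_self, Units.val_one,
    Int.cast_one, one_mul]
  exact hZ u hu

theorem PosMaximalMinors.sign_mul_det_submatrix_sumElim_pos {Z : Matrix (Fin n) (Fin (k + M)) ℝ}
    (hZ : PosMaximalMinors Z) {s : Fin k → Fin n} {L : Fin M → Fin n} (hs : StrictMono s)
    (hL : StrictMono L) (hsL : ∀ a b, s a ≠ L b) :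
    0 < ((∏ a, ∏ b, if s a < L b then 1 else -1 : ℤˣ) : ℝ) *
      (Z.submatrix (Sum.elim s L) finSumFinEquiv).det := by
  have happend : Z.submatrix (Sum.elim s L) finSumFinEquiv =
      (Z.submatrix (Fin.append s L) id).submatrix finSumFinEquiv finSumFinEquiv := by
    ext (a | b) j <;> simp
  rw [happend, det_submatrix_equiv_self, ← inversionSign_append hs hL]
  exact hZ.inversionSign_mul_det_pos
    (Fin.append_injective_iff.2 ⟨hs.injective, hL.injective, hsL⟩)

theorem twistor_mul_pos {Z : Matrix (Fin n) (Fin (k + M)) ℝ} (hZ : PosMaximalMinors Z)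
    {C : Matrix (Fin k) (Fin n) ℝ} (hC : PosRowMinors C) {L : Fin M → Fin n} (hL : StrictMono L)
    (hkM : k + M ≤ n) (ε : ℤˣ)
    (hε : ∀ s : Fin k → Fin n, StrictMono s → (∀ a b, s a ≠ L b) →
      ∏ a, ∏ b, (if s a < L b then 1 else -1 : ℤˣ) = ε) :
    0 < (ε : ℝ) * twistor Z (C * Z) L := by
  classical
  rw [twistor_mul_eq_sum, mul_sum]
  have hterm (s : Fin k → Fin n) (hs : StrictMono s) (hsL : ∀ a b, s a ≠ L b) :
      0 < (ε : ℝ) *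
        ((C.submatrix id s).det * (Z.submatrix (Sum.elim s L) finSumFinEquiv).det) := by
    rw [mul_left_comm, ← hε s hs hsL]
    exact mul_pos (hC s hs) (hZ.sign_mul_det_submatrix_sumElim_pos hs hL hsL)
  refine sum_pos' (fun s hs => ?_) ?_
  · by_cases hsL : ∀ a b, s a ≠ L b
    · exact (hterm s (mem_filter.1 hs).2 hsL).le
    · rw [det_submatrix_eq_zero_of_not_injective _ _ fun h => hsL (Sum.elim_injective.1 h).2.2]
      simp
  · obtain ⟨s, hs, hsL⟩ := exists_strictMono_forall_ne (k := k) L hkM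
    exact ⟨s, mem_filter.2 ⟨mem_univ _, hs⟩, hterm s hs hsL⟩

end Twistor

/-- Strict coarse boundary conditions for odd `m` (here the paper's odd `m` is `m + 1`, so
`m` is even, and `I` is a strictly increasing pair list of length `m` = paper's `m − 1`):
if the entries of `I` lie in `[2, n]` (1-indexed) then `(−1)^k ⟨Y, 1, I⟩ > 0`, and if the
entries of `I` lie in `[1, n−1]` (1-indexed) then `⟨Y, I, n⟩ > 0`, where `Y = C Z`. -/
theorem stmt9 (k m n : ℕ) (hm : Even m) (hmn : k + (m + 1) ≤ n)
    (Z : Matrix (Fin n) (Fin (k + (m + 1))) ℝ) (hZ : PosMaximalMinors Z)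
    (C : Matrix (Fin k) (Fin n) ℝ) (hC : PosRowMinors C)
    (I : Fin m → Fin n) (hI : StrictMono I) (hpair : ConsecPairs I) :
    ((∀ j, 1 ≤ (I j : ℕ)) →
        0 < (-1 : ℝ) ^ k * twistor Z (C * Z) (Fin.cons (⟨0, by omega⟩ : Fin n) I)) ∧
    ((∀ j, (I j : ℕ) ≤ n - 2) →
        0 < twistor Z (C * Z) (Fin.snoc I (⟨n - 1, by omega⟩ : Fin n))) := by
  refine ⟨fun hI1 => ?_, fun hIn => ?_⟩
  · have hL : StrictMono (Fin.cons (⟨0, by omega⟩ : Fin n) I) :=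
      Fin.strictMono_cons.2 ⟨fun j => Fin.lt_def.2 (hI1 j), hI⟩
    simpa using twistor_mul_pos hZ hC hL hmn ((-1) ^ k) fun s _ hsL => by
      simp [hpair.prod_sign_lt_cons_zero hm _ (hsL _)]
  · have hL : StrictMono (Fin.snoc I (⟨n - 1, by omega⟩ : Fin n)) :=
      strictMono_snoc_of_lt hI fun j => Fin.lt_def.2 <| by
        have := hIn j
        have := j.pos
        show (I j : ℕ) < n - 1
        omega
    simpa using twistor_mul_pos hZ hC hL hmn 1 fun s _ hsL =>
      prod_eq_one fun a _ => hpair.prod_sign_lt_snoc_last hm _ (hsL a)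
end

section
/- Let m = 2r−1 be odd, k, n with k+m ≤ n, Z with positive maximal minors, C with positive maximal minors, Y = CZ, B = (b_1,b_1+1,...,b_{r−1},b_{r−1}+1) ⊂ [n]. Suppose i_0 ∈ [n]∖B with 2 ≤ i_0 ≤ n−1, and let i_0^− = max([1,i_0−1]∩B^c), i_0^+ = min([i_0+1,n]∩B^c). Then it is impossible that ⟨Y,B,i_0⟩ = 0 while sign⟨Y,B,i_0^−⟩ = sign⟨Y,B,i_0^+⟩ ≠ 0. -/
open Finset Matrix

section SignAlternation

variable {α : Type*} [LinearOrder α]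

def SignAlternatesOn (w : α → ℝ) (ε : ℝ) (S : Finset α) : Prop :=
  ∀ x ∈ S, 0 ≤ ε * (-1) ^ #{y ∈ S | y < x} * w x

def StrictSignAlternatesOn (w : α → ℝ) (ε : ℝ) (S : Finset α) : Prop :=
  ∀ x ∈ S, 0 < ε * (-1) ^ #{y ∈ S | y < x} * w x

def SignChangesOnlyAt (w : α → ℝ) (ε : ℝ) (U A : Finset α) : Prop :=
  ∀ x ∈ U \ A, 0 ≤ ε * (-1) ^ #{y ∈ A | y < x} * w x

variable {w : α → ℝ} {ε : ℝ} {S T U A : Finset α}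

lemma card_filter_union_lt (hST : Disjoint S T) (x : α) :
    #{y ∈ S ∪ T | y < x} = #{y ∈ S | y < x} + #{y ∈ T | y < x} := by
  rw [filter_union, card_union_of_disjoint (disjoint_filter_filter hST)]

lemma card_filter_insert_lt_of_le {a x : α} (hxa : x ≤ a) :
    #{y ∈ insert a S | y < x} = #{y ∈ S | y < x} := by
  rw [filter_insert, if_neg (not_lt.mpr hxa)]

lemma card_filter_lt_of_forall_lt {x : α} (h : ∀ y ∈ S, y < x) : #{y ∈ S | y < x} = #S := by
  rw [filter_true_of_mem h]

lemma card_filter_lt_eq_of_forall {x x' : α} (hxx' : x ≤ x') (h : ∀ y ∈ S, y < x ∨ x' ≤ y) :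
    #{y ∈ S | y < x} = #{y ∈ S | y < x'} := by
  congr 1
  exact filter_congr fun y hy => by
    rcases h y hy with h | h <;> constructor <;> intro <;> order

lemma card_filter_lt_eq_add_one {x x' : α} (hx : x ∈ S) (hxx' : x < x')
    (h : ∀ y ∈ S, y ≤ x ∨ x' ≤ y) : #{y ∈ S | y < x'} = #{y ∈ S | y < x} + 1 := by
  rw [← card_insert_of_notMem (by simp : x ∉ {y ∈ S | y < x})]
  congr 1
  ext y
  have := h y
  simp only [mem_filter, mem_insert]
  grind

lemma StrictSignAlternatesOn.apply_ne_zero (hS : StrictSignAlternatesOn w ε S) {x : α}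
    (hx : x ∈ S) : w x ≠ 0 := by
  intro h
  simpa [h] using hS x hx

lemma StrictSignAlternatesOn.ne_zero (hS : StrictSignAlternatesOn w ε S) (hne : S.Nonempty) :
    ε ≠ 0 := by
  obtain ⟨x, hx⟩ := hne
  intro h
  simpa [h] using hS x hx

lemma SignAlternatesOn.union (hS : SignAlternatesOn w ε S) (hST : Disjoint S T)
    (heven : ∀ x ∈ S, Even #{y ∈ T | y < x})
    (hT : ∀ x ∈ T, 0 ≤ ε * (-1) ^ (#{y ∈ S | y < x} + #{y ∈ T | y < x}) * w x) :
    SignAlternatesOn w ε (S ∪ T) := by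
  intro x hx
  rw [card_filter_union_lt hST]
  rcases mem_union.mp hx with hxS | hxT
  · rw [pow_add, (heven x hxS).neg_one_pow, mul_one]
    exact hS x hxS
  · exact hT x hxT

lemma SignAlternatesOn.union_pair (hS : SignAlternatesOn w ε S) {u v : α} (huv : u < v)
    (hsep : ∀ y ∈ S, y < u ∨ v < y) (hu : 0 ≤ ε * (-1) ^ #{y ∈ S | y < u} * w u)
    (hv : 0 ≤ ε * (-1) ^ (#{y ∈ S | y < u} + 1) * w v) :
    SignAlternatesOn w ε (S ∪ {u, v}) := by
  have hvS := card_filter_lt_eq_of_forall huv.le fun y hy => (hsep y hy).imp_right le_of_lt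
  refine hS.union ?_ (fun x hx => ?_) (fun x hx => ?_)
  · rw [disjoint_insert_right, disjoint_singleton_right]
    exact ⟨fun h => by rcases hsep u h with h' | h' <;> order,
      fun h => by rcases hsep v h with h' | h' <;> order⟩
  · rcases hsep x hx with h | h
    · simp [filter_insert, filter_singleton, not_lt.mpr h.le, not_lt.mpr (h.trans huv).le]
    · simp [filter_insert, filter_singleton, h, huv.trans h, huv.ne]
  · obtain rfl | rfl : x = u ∨ x = v := by simpa using hx
    · simpa [filter_insert, filter_singleton, not_lt.mpr huv.le] using hu
    · simpa [filter_insert, filter_singleton, huv, ← hvS] using hv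

/-- Two points can be added to a strictly alternating `S` across a gap `(a, c)` of zeros of `w`
whose endpoints have the same sign: `{a, b}` if `a` has the sign expected at `b`, else `{b, c}`. -/
lemma StrictSignAlternatesOn.exists_signAlternatesOn_of_gap (hS : StrictSignAlternatesOn w ε S)
    (hε : ε ≠ 0) {a b c : α} (hab : a < b) (hbc : b < c) (hac : 0 < w a * w c)
    (hgap : ∀ x, a < x → x < c → w x = 0) :
    ∃ S', #S' = #S + 2 ∧ S' ⊆ S ∪ {a, b, c} ∧ SignAlternatesOn w ε S' := by
  have hout : ∀ y ∈ S, y ≤ a ∨ c ≤ y := fun y hy => by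
    by_contra! h
    exact hS.apply_ne_zero hy (hgap y h.1 h.2)
  have hb : w b = 0 := hgap b hab hbc
  suffices ∃ u v, u < v ∧ u ∉ S ∧ v ∉ S ∧ ({u, v} : Finset α) ⊆ {a, b, c} ∧
      SignAlternatesOn w ε (S ∪ {u, v}) by
    obtain ⟨u, v, huv, hu, hv, hsub, halt⟩ := this
    refine ⟨S ∪ {u, v}, ?_, union_subset_union_right hsub, halt⟩
    rw [card_union_of_disjoint (by simp [hu, hv]), card_pair huv.ne]
  have hbS : b ∉ S := fun h => hS.apply_ne_zero h hb
  have hSweak : SignAlternatesOn w ε S := fun x hx => (hS x hx).le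
  set q := #{y ∈ S | y < b}
  by_cases hqa : 0 < ε * (-1) ^ q * w a
  · have haS : a ∉ S := fun haS => by
      have ha := hS a haS
      rw [show q = _ from card_filter_lt_eq_add_one haS hab fun y hy =>
        (hout y hy).imp_right hbc.le.trans, pow_succ] at hqa
      linarith
    have hsep : ∀ y ∈ S, y < a ∨ b < y := fun y hy =>
      (hout y hy).imp (fun h => h.lt_of_ne (by rintro rfl; exact haS hy)) hbc.trans_le
    have hqa' : #{y ∈ S | y < a} = q :=
      card_filter_lt_eq_of_forall hab.le fun y hy => (hsep y hy).imp_right le_of_lt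
    exact ⟨a, b, hab, haS, hbS, by simp,
      hSweak.union_pair hab hsep (hqa' ▸ hqa.le) (by simp [hb])⟩
  · have hqc : 0 < ε * (-1) ^ (q + 1) * w c := by
      have hneg : ε * (-1) ^ q * w a < 0 := (not_lt.mp hqa).lt_of_ne
        (mul_ne_zero (mul_ne_zero hε (by positivity)) (left_ne_zero_of_mul hac.ne'))
      rw [pow_succ]
      nlinarith [mul_self_nonneg (w a)]
    have hcS : c ∉ S := fun hcS => by
      have hc := hS c hcS
      rw [← card_filter_lt_eq_of_forall hbc.le fun y hy => (hout y hy).imp_left hab.trans_le']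
        at hc
      rw [pow_succ] at hqc
      linarith
    have hsep : ∀ y ∈ S, y < b ∨ c < y := fun y hy =>
      (hout y hy).imp hab.trans_le' fun h => h.lt_of_ne (by rintro rfl; exact hcS hy)
    exact ⟨b, c, hbc, hbS, hcS, by simp,
      hSweak.union_pair hbc hsep (by simp [hb]) hqc.le⟩

lemma StrictSignAlternatesOn.insert_of_forall_lt (hS : StrictSignAlternatesOn w ε S) {a : α}
    (haS : ∀ y ∈ S, y < a) (ha : 0 < ε * (-1) ^ #S * w a) :
    StrictSignAlternatesOn w ε (insert a S) := by
  intro x hx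
  rcases mem_insert.mp hx with rfl | hx
  · rwa [card_filter_insert_lt_of_le le_rfl, card_filter_lt_of_forall_lt haS]
  · rw [card_filter_insert_lt_of_le (haS x hx).le]
    exact hS x hx

lemma SignChangesOnlyAt.insert_of_forall_lt {s : Finset α} (hA : SignChangesOnlyAt w ε s A)
    {a : α} (has : ∀ y ∈ s, y < a) : SignChangesOnlyAt w ε (insert a s) (insert a A) := by
  intro x hx
  obtain ⟨hxs, hxA⟩ := mem_sdiff.mp hx
  rw [mem_insert, not_or] at hxA
  have hxs := (mem_insert.mp hxs).resolve_left hxA.1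
  rw [card_filter_insert_lt_of_le (has x hxs).le]
  exact hA x (mem_sdiff.mpr ⟨hxs, hxA.2⟩)

lemma SignChangesOnlyAt.insert_of_sign {s : Finset α} (hA : SignChangesOnlyAt w ε s A)
    (hAs : A ⊆ s) {a : α} (has : ∀ y ∈ s, y < a) (ha : 0 ≤ ε * (-1) ^ #A * w a) :
    SignChangesOnlyAt w ε (insert a s) A := by
  intro x hx
  obtain ⟨rfl | hxs, hxA⟩ := mem_sdiff.mp hx |>.imp_left mem_insert.mp
  · rwa [card_filter_lt_of_forall_lt fun y hy => has y (hAs hy)]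
  · exact hA x (mem_sdiff.mpr ⟨hxs, hxA⟩)

/-- Scanning `U` from left to right, `S` collects one point per sign change of `w` and `A` marks
where each change happens. -/
lemma exists_strictSignAlternatesOn_signChangesOnlyAt (w : α → ℝ) (U : Finset α)
    (hU : ∃ x ∈ U, w x ≠ 0) :
    ∃ S A ε, S ⊆ U ∧ A ⊆ U ∧ #S = #A + 1 ∧ StrictSignAlternatesOn w ε S ∧
      SignChangesOnlyAt w ε U A := by
  suffices h : (∀ x ∈ U, w x = 0) ∨ ∃ S A ε, S ⊆ U ∧ A ⊆ U ∧ #S = #A + 1 ∧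
      StrictSignAlternatesOn w ε S ∧ SignChangesOnlyAt w ε U A by
    obtain ⟨x, hx, hwx⟩ := hU
    exact h.resolve_left fun h0 => hwx (h0 x hx)
  clear hU
  induction U using Finset.induction_on_max with
  | empty => simp
  | insert a s has ih =>
    rcases ih with h0 | ⟨S, A, ε, hSs, hAs, hcard, hS, hA⟩
    · by_cases hwa : w a = 0
      · left
        simpa [hwa] using h0
      right
      refine ⟨{a}, ∅, w a, by simp, by simp, by simp, fun x hx => ?_, fun x hx => ?_⟩
      · rw [mem_singleton.mp hx]
        simpa [filter_singleton] using mul_self_pos.mpr hwa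
      · rcases mem_insert.mp (mem_sdiff.mp hx).1 with rfl | hx
        · simpa using mul_self_nonneg (w x)
        · simp [h0 x hx]
    right
    have haS : a ∉ S := fun h => (has a (hSs h)).false
    have haA : a ∉ A := fun h => (has a (hAs h)).false
    by_cases hsame : 0 ≤ ε * (-1) ^ #A * w a
    · exact ⟨S, A, ε, hSs.trans (subset_insert _ _), hAs.trans (subset_insert _ _), hcard, hS,
        hA.insert_of_sign hAs has hsame⟩
    · refine ⟨insert a S, insert a A, ε, insert_subset_insert _ hSs, insert_subset_insert _ hAs,
        by simp [haS, haA, hcard], hS.insert_of_forall_lt (fun y hy => has y (hSs hy)) ?_,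
        hA.insert_of_forall_lt has⟩
      rw [hcard, pow_succ]
      linarith

lemma SignChangesOnlyAt.insert_max' (hA : SignChangesOnlyAt w ε U A) (hne : (U \ A).Nonempty) :
    SignChangesOnlyAt w ε U (insert ((U \ A).max' hne) A) := by
  intro x hx
  rw [mem_sdiff, mem_insert, not_or] at hx
  have hxA : x ∈ U \ A := mem_sdiff.mpr ⟨hx.1, hx.2.2⟩
  rw [card_filter_insert_lt_of_le (le_max' _ x hxA)]
  exact hA x hxA

lemma SignChangesOnlyAt.exists_card_eq (hA : SignChangesOnlyAt w ε U A) (hAU : A ⊆ U) {K : ℕ}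
    (hAK : #A ≤ K) (hKU : K ≤ #U) : ∃ A', A' ⊆ U ∧ #A' = K ∧ SignChangesOnlyAt w ε U A' := by
  induction K with
  | zero => exact ⟨A, hAU, by omega, hA⟩
  | succ K ih =>
    rcases hAK.eq_or_lt with h | h
    · exact ⟨A, hAU, h, hA⟩
    obtain ⟨A', hA'U, hA'K, hA'⟩ := ih (by omega) (by omega)
    have hne : (U \ A').Nonempty := by rw [← card_pos, card_sdiff_of_subset hA'U]; omega
    have hmax := mem_sdiff.mp (max'_mem _ hne)
    exact ⟨_, insert_subset hmax.1 hA'U, by rw [card_insert_of_notMem hmax.2, hA'K],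
      hA'.insert_max' hne⟩

end SignAlternation

section Counting

lemma StrictMono.apply_lt_iff_lt_card {β : Type*} [LinearOrder β] {m : ℕ} {f : Fin m → β}
    (hf : StrictMono f) (a : Fin m) (x : β) : f a < x ↔ (a : ℕ) < #{b | f b < x} := by
  constructor
  · intro h
    have hsub : Iic a ⊆ ({b | f b < x} : Finset _) := fun b hb =>
      mem_filter.mpr ⟨mem_univ _, (hf.monotone (mem_Iic.mp hb)).trans_lt h⟩
    have := card_le_card hsub
    rw [Fin.card_Iic] at this
    omega
  · intro h
    by_contra! h'
    have hsub : ({b | f b < x} : Finset _) ⊆ Iio a := fun b hb =>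
      mem_Iio.mpr (hf.lt_iff_lt.mp ((mem_filter.mp hb).2.trans_le h'))
    have := card_le_card hsub
    rw [Fin.card_Iio] at this
    omega

lemma card_filter_orderEmbOfFin_lt {β : Type*} [LinearOrder β] (S : Finset β) {m : ℕ}
    (h : #S = m) (x : β) : #{b | S.orderEmbOfFin h b < x} = #{y ∈ S | y < x} := by
  conv_rhs => rw [← map_orderEmbOfFin_univ S h]
  rw [filter_map, card_map]
  rfl

lemma card_filter_lt_orderEmbOfFin {β : Type*} [LinearOrder β] (S : Finset β) {m : ℕ}
    (h : #S = m) (t : Fin m) : #{y ∈ S | y < S.orderEmbOfFin h t} = t := by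
  rw [← card_filter_orderEmbOfFin_lt S h, ← Fin.card_Iio]
  congr 1
  ext b
  simp

lemma ConsecPairs.even_card_filter_lt {m n : ℕ} {I : Fin m → Fin n} (hpair : ConsecPairs I)
    (hI : StrictMono I) (hm : Even m) {x : Fin n} (hx : ∀ a, I a ≠ x) : Even #{a | I a < x} := by
  set c := #{a | I a < x} with hc
  by_contra hodd
  rw [Nat.not_even_iff_odd] at hodd
  have hcm : c < m := by
    have : c ≤ m := (card_filter_le _ _).trans (by simp)
    rcases this.lt_or_eq with h | h
    · exact h
    · exact absurd (h ▸ hm) (Nat.not_even_iff_odd.mpr hodd)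
  obtain ⟨d, hd⟩ := hodd
  have hprev : I ⟨2 * d, by omega⟩ < x := (hI.apply_lt_iff_lt_card _ x).mpr (by simp; omega)
  have hstep := hpair ⟨2 * d, by omega⟩ ⟨c, hcm⟩ (by simp; omega) (by simp)
  have hnext : I ⟨c, hcm⟩ < x := by
    have := hx ⟨c, hcm⟩
    rw [Ne, Fin.ext_iff] at this
    rw [Fin.lt_def] at hprev ⊢
    omega
  exact absurd ((hI.apply_lt_iff_lt_card _ x).mp hnext) (lt_irrefl c)

lemma SignAlternatesOn.union_image_of_consecPairs {m n : ℕ} {w : Fin n → ℝ} {ε : ℝ}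
    {S : Finset (Fin n)} (hS : SignAlternatesOn w ε S) {I : Fin m → Fin n}
    (hpair : ConsecPairs I) (hI : StrictMono I) (hm : Even m) (hwI : ∀ a, w (I a) = 0)
    (hSI : ∀ x ∈ S, ∀ a, I a ≠ x) :
    SignAlternatesOn w ε (S ∪ univ.image I) ∧ #(S ∪ univ.image I) = #S + m := by
  have hdisj : Disjoint S (univ.image I) := disjoint_left.mpr fun x hx hxI => by
    obtain ⟨a, -, rfl⟩ := mem_image.mp hxI
    exact hSI _ hx a rfl
  refine ⟨hS.union hdisj (fun x hx => ?_) fun x hx => ?_, ?_⟩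
  · rw [filter_image, card_image_of_injective _ hI.injective]
    exact hpair.even_card_filter_lt hI hm (hSI x hx)
  · obtain ⟨a, -, rfl⟩ := mem_image.mp hx
    simp [hwI]
  · rw [card_union_of_disjoint hdisj, card_image_of_injective _ hI.injective, card_univ,
      Fintype.card_fin]

end Counting

section Determinants

lemma det_insertNth_column {R : Type*} [CommRing R] {k : ℕ} (M : Matrix (Fin (k + 1)) (Fin k) R)
    (x : Fin (k + 1) → R) (q : Fin (k + 1)) :
    (of fun r => Fin.insertNth q (x r) (M r)).det =
      (-1) ^ (q : ℕ) *
        ∑ r : Fin (k + 1), (-1) ^ (r : ℕ) * x r * (M.submatrix r.succAbove id).det := by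
  rw [det_succ_column _ q, mul_sum]
  refine sum_congr rfl fun r _ => ?_
  simp only [of_apply, Fin.insertNth_apply_same, pow_add]
  have : (of fun r => Fin.insertNth q (x r) (M r)).submatrix r.succAbove q.succAbove =
      M.submatrix r.succAbove id := by
    ext a b
    simp
  rw [this]
  ring

lemma sum_neg_one_pow_mul_det_submatrix_succAbove {R : Type*} [CommRing R] {k : ℕ}
    (M : Matrix (Fin (k + 1)) (Fin k) R) (c : Fin k) :
    ∑ r : Fin (k + 1), (-1) ^ (r : ℕ) * M r c * (M.submatrix r.succAbove id).det = 0 := by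
  have h := det_insertNth_column M (fun r => M r c) 0
  rw [det_zero_of_column_eq (Fin.succ_ne_zero c).symm (by simp)] at h
  simpa using h.symm

lemma PosMaximalMinors.eq_zero_of_alternating {n p : ℕ} {Z : Matrix (Fin n) (Fin p) ℝ}
    (hZ : PosMaximalMinors Z) {α : Fin p → ℝ} {ε : ℝ} (hε : ε ≠ 0) {j : Fin (p + 1) → Fin n}
    (hj : StrictMono j) (halt : ∀ t : Fin (p + 1), 0 ≤ ε * (-1) ^ (t : ℕ) * (Z *ᵥ α) (j t)) :
    α = 0 := by
  set M : Matrix (Fin (p + 1)) (Fin p) ℝ := Z.submatrix j id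
  have hΔ : ∀ t : Fin (p + 1), 0 < (M.submatrix t.succAbove id).det := fun t =>
    hZ _ (hj.comp (Fin.strictMono_succAbove t))
  have hsum : ∑ t : Fin (p + 1),
      ε * (-1) ^ (t : ℕ) * (Z *ᵥ α) (j t) * (M.submatrix t.succAbove id).det = 0 :=
    calc _ = ε * ∑ c, α c *
          ∑ t : Fin (p + 1), (-1) ^ (t : ℕ) * M t c * (M.submatrix t.succAbove id).det := by
          simp only [mulVec, dotProduct, mul_sum, sum_mul]
          rw [sum_comm]
          exact sum_congr rfl fun _ _ => sum_congr rfl fun _ _ => by simp [M]; ring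
      _ = 0 := by simp [sum_neg_one_pow_mul_det_submatrix_succAbove]
  apply eq_zero_of_mulVec_eq_zero (hZ _ (hj.comp Fin.strictMono_castSucc)).ne'
  funext a
  have := (sum_eq_zero_iff_of_nonneg fun t _ => mul_nonneg (halt t) (hΔ t).le).mp hsum
    a.castSucc (mem_univ _)
  simpa [hε, (hΔ _).ne', mulVec] using this

lemma PosMaximalMinors.eq_zero_of_signAlternatesOn {n p : ℕ} {Z : Matrix (Fin n) (Fin p) ℝ}
    (hZ : PosMaximalMinors Z) {α : Fin p → ℝ} {ε : ℝ} (hε : ε ≠ 0) {S : Finset (Fin n)}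
    (hS : p + 1 ≤ #S) (halt : SignAlternatesOn (Z *ᵥ α) ε S) : α = 0 := by
  set e := S.orderEmbOfFin rfl
  refine hZ.eq_zero_of_alternating hε (j := fun t => e (Fin.castLE hS t))
    (e.strictMono.comp (Fin.strictMono_castLE hS)) fun t => ?_
  have := halt _ (orderEmbOfFin_mem S rfl (Fin.castLE hS t))
  rwa [card_filter_lt_orderEmbOfFin] at this

lemma PosRowMinors.eq_zero_of_mulVec_eq_zero {k n : ℕ} {C : Matrix (Fin k) (Fin n) ℝ}
    (hC : PosRowMinors C) {w : Fin n → ℝ} (hCw : C *ᵥ w = 0) {T : Finset (Fin n)} (hT : #T = k)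
    (hw : ∀ i ∉ T, w i = 0) : w = 0 := by
  set g := T.orderEmbOfFin hT
  have hg : (of fun a b => C a (g b)) *ᵥ (w ∘ g) = 0 := by
    rw [← hCw]
    funext a
    calc ∑ b, C a (g b) * w (g b) = ∑ i ∈ T, C a i * w i := by
          conv_rhs => rw [← map_orderEmbOfFin_univ T hT, sum_map]
          rfl
      _ = ∑ i, C a i * w i := sum_subset (subset_univ _) fun i _ hi => by simp [hw i hi]
  have hgw := Matrix.eq_zero_of_mulVec_eq_zero (hC g g.strictMono).ne' hg
  funext i
  by_cases hi : i ∈ T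
  · obtain ⟨b, rfl⟩ : i ∈ Set.range g := by rwa [range_orderEmbOfFin]
    exact congrFun hgw b
  · exact hw i hi

/-- `adjoinColumnDet C A hA x = det [x | C_A]`, expanded along its first column, where `C_A` lists
the columns of `C` indexed by `A` in increasing order. -/
noncomputable def adjoinColumnDet {k n : ℕ} (C : Matrix (Fin (k + 1)) (Fin n) ℝ)
    (A : Finset (Fin n)) (hA : #A = k) (x : Fin (k + 1) → ℝ) : ℝ :=
  ∑ r : Fin (k + 1),
    (-1) ^ (r : ℕ) * x r * ((C.submatrix id (A.orderEmbOfFin hA)).submatrix r.succAbove id).det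

section AdjoinColumnDet

variable {k n : ℕ} {C : Matrix (Fin (k + 1)) (Fin n) ℝ} {A : Finset (Fin n)}

lemma adjoinColumnDet_col_of_mem (hA : #A = k) {i : Fin n} (hi : i ∈ A) :
    adjoinColumnDet C A hA (Cᵀ i) = 0 := by
  obtain ⟨c, rfl⟩ : i ∈ Set.range (A.orderEmbOfFin hA) := by rwa [range_orderEmbOfFin]
  exact sum_neg_one_pow_mul_det_submatrix_succAbove (C.submatrix id (A.orderEmbOfFin hA)) c

lemma sum_mul_adjoinColumnDet_col (hA : #A = k) (w : Fin n → ℝ) :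
    ∑ i, w i * adjoinColumnDet C A hA (Cᵀ i) = adjoinColumnDet C A hA (C *ᵥ w) := by
  simp only [adjoinColumnDet, mulVec, dotProduct, mul_sum, sum_mul, transpose_apply]
  rw [sum_comm]
  exact sum_congr rfl fun _ _ => sum_congr rfl fun _ _ => by ring

lemma PosRowMinors.adjoinColumnDet_col_pos (hC : PosRowMinors C) (hA : #A = k) {i : Fin n}
    (hi : i ∉ A) : 0 < (-1) ^ #{y ∈ A | y < i} * adjoinColumnDet C A hA (Cᵀ i) := by
  set a := A.orderEmbOfFin hA
  set q : Fin (k + 1) := ⟨#{y ∈ A | y < i}, Nat.lt_succ_of_le (hA ▸ card_filter_le A _)⟩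
  have hmono : StrictMono (q.insertNth i a) := by
    rw [Fin.strictMono_insertNth_iff]
    refine ⟨a.strictMono, fun c hc => ?_, fun c hc => ?_⟩
    · rw [a.strictMono.apply_lt_iff_lt_card, card_filter_orderEmbOfFin_lt]
      exact hc
    · refine lt_of_le_of_ne (not_lt.mp fun h => ?_) fun h => hi (h ▸ orderEmbOfFin_mem A hA c)
      rw [a.strictMono.apply_lt_iff_lt_card, card_filter_orderEmbOfFin_lt] at h
      exact absurd hc (not_le.mpr h)
  have hcol : (of fun r b => C r (q.insertNth (α := fun _ => Fin n) i a b)) =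
      of fun r => q.insertNth (C r i) (C.submatrix id a r) := by
    ext r b
    cases b using q.succAboveCases <;> simp
  have hdet := hC _ hmono
  rwa [hcol, det_insertNth_column] at hdet

end AdjoinColumnDet

/-- The covector `φ i = det [C_i | C_A]` annihilates `ker C`, vanishes on `A`, and off `A` has the
sign of `(-1) ^ #{y ∈ A | y < i}`; so `∑ i, ε * w i * φ i = 0` is a sum of nonnegative terms. -/
lemma PosRowMinors.eq_zero_of_signChangesOnlyAt {k n : ℕ} {C : Matrix (Fin (k + 1)) (Fin n) ℝ}
    (hC : PosRowMinors C) (hkn : k < n) {w : Fin n → ℝ} (hCw : C *ᵥ w = 0) {ε : ℝ} (hε : ε ≠ 0)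
    {A : Finset (Fin n)} (hA : #A = k) (hsign : SignChangesOnlyAt w ε univ A) : w = 0 := by
  set φ := fun i => adjoinColumnDet C A hA (Cᵀ i)
  have hsum : ∑ i, ε * w i * φ i = 0 := by
    simp only [φ, mul_assoc, ← mul_sum, sum_mul_adjoinColumnDet_col, hCw]
    simp [adjoinColumnDet]
  have hnonneg : ∀ i ∈ univ, 0 ≤ ε * w i * φ i := fun i _ => by
    by_cases hi : i ∈ A
    · simp [φ, adjoinColumnDet_col_of_mem hA hi]
    · calc 0 ≤ (ε * (-1) ^ #{y ∈ A | y < i} * w i) * ((-1) ^ #{y ∈ A | y < i} * φ i) :=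
            mul_nonneg (hsign i (by simp [hi])) (hC.adjoinColumnDet_col_pos hA hi).le
        _ = ε * w i * φ i := by ring_nf; simp
  have hoff : ∀ i ∉ A, w i = 0 := fun i hi => by
    have hφi : φ i ≠ 0 := fun h => by simpa [φ, h] using hC.adjoinColumnDet_col_pos hA hi
    simpa [hε, hφi] using (sum_eq_zero_iff_of_nonneg hnonneg).mp hsum i (mem_univ i)
  obtain ⟨i, hi⟩ : ∃ i, i ∉ A := by
    by_contra! h
    rw [eq_univ_of_forall h, card_univ, Fintype.card_fin] at hA
    omega
  refine hC.eq_zero_of_mulVec_eq_zero hCw (T := insert i A) (by rw [card_insert_of_notMem hi, hA])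
    fun j hj => hoff j fun h => hj (mem_insert_of_mem h)

theorem PosRowMinors.exists_strictSignAlternatesOn {k n : ℕ} {C : Matrix (Fin k) (Fin n) ℝ}
    (hC : PosRowMinors C) (hkn : k ≤ n) {w : Fin n → ℝ} (hw : w ≠ 0) (hCw : C *ᵥ w = 0) :
    ∃ ε S, k + 1 ≤ #S ∧ StrictSignAlternatesOn w ε S := by
  obtain ⟨S, A, ε, -, hAU, hcard, hS, hA⟩ :=
    exists_strictSignAlternatesOn_signChangesOnlyAt w univ (by simpa [funext_iff] using hw)
  refine ⟨ε, S, not_lt.mp fun hlt => ?_, hS⟩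
  obtain ⟨K, rfl⟩ : ∃ K, k = K + 1 := ⟨k - 1, by omega⟩
  obtain ⟨A', -, hA'K, hA'⟩ := hA.exists_card_eq hAU (K := K) (by omega) (by simp; omega)
  exact hw (hC.eq_zero_of_signChangesOnlyAt (by omega) hCw (hS.ne_zero (card_pos.mp (by omega)))
    hA'K hA')

end Determinants

section Twistor

def twistorMatrix {k m : ℕ} (Y : Matrix (Fin k) (Fin (k + m)) ℝ) (R : Fin m → Fin (k + m) → ℝ) :
    Matrix (Fin k ⊕ Fin m) (Fin k ⊕ Fin m) ℝ :=
  of fun i j => Sum.elim (fun a => Y a) R i (finSumFinEquiv j)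

lemma twistor_snoc {k m n : ℕ} (Z : Matrix (Fin n) (Fin (k + (m + 1))) ℝ)
    (Y : Matrix (Fin k) (Fin (k + (m + 1))) ℝ) (L : Fin m → Fin n) (i : Fin n) :
    twistor Z Y (Fin.snoc L i) = (twistorMatrix Y (Fin.snoc (fun b => Z (L b)) (Z i))).det := by
  have hrows : (fun b => Z (Fin.snoc (α := fun _ => Fin n) L i b)) =
      Fin.snoc (fun b => Z (L b)) (Z i) := by
    funext b
    cases b using Fin.lastCases <;> simp
  rw [← hrows]
  rfl

lemma det_updateRow_eq_sum {ι R : Type*} [Fintype ι] [DecidableEq ι] [CommRing R]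
    (M : Matrix ι ι R) (r : ι) (v : ι → R) :
    (M.updateRow r v).det = ∑ j, v j * (M.updateRow r (Pi.single j 1)).det := by
  rw [det_eq_sum_mul_adjugate_row _ r]
  simp [adjugate_apply, updateRow_idem]

lemma exists_det_twistorMatrix_snoc_eq_dotProduct {k m : ℕ}
    (Y : Matrix (Fin k) (Fin (k + (m + 1))) ℝ) (R : Fin m → Fin (k + (m + 1)) → ℝ) :
    ∃ α, ∀ x, (twistorMatrix Y (Fin.snoc R x)).det = x ⬝ᵥ α := by
  set e := finSumFinEquiv (m := k) (n := m + 1)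
  set M := twistorMatrix Y (Fin.snoc R 0)
  refine ⟨fun c => (M.updateRow (.inr (Fin.last m)) (Pi.single (e.symm c) 1)).det, fun x => ?_⟩
  have hM : twistorMatrix Y (Fin.snoc R x) = M.updateRow (.inr (Fin.last m)) (x ∘ e) := by
    ext i j
    rcases i with a | b
    · simp [M, twistorMatrix]
    · cases b using Fin.lastCases <;> simp [M, twistorMatrix, updateRow_apply, e]
  rw [hM, det_updateRow_eq_sum, dotProduct, ← e.sum_comp]
  simp

lemma det_twistorMatrix_snoc_of_mem {k m : ℕ} (Y : Matrix (Fin k) (Fin (k + (m + 1))) ℝ)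
    (R : Fin m → Fin (k + (m + 1)) → ℝ) {x : Fin (k + (m + 1)) → ℝ}
    (hx : x ∈ Set.range Y ∪ Set.range R) : (twistorMatrix Y (Fin.snoc R x)).det = 0 := by
  rcases hx with ⟨a, rfl⟩ | ⟨b, rfl⟩
  · exact det_zero_of_row_eq (i := .inl a) (j := .inr (Fin.last m)) (by simp)
      (by ext; simp [twistorMatrix])
  · exact det_zero_of_row_eq (i := .inr b.castSucc) (j := .inr (Fin.last m))
      (by simp [Fin.castSucc_ne_last])
      (by ext; simp [twistorMatrix])

lemma exists_twistor_snoc_eq_mulVec {k m n : ℕ} (Z : Matrix (Fin n) (Fin (k + (m + 1))) ℝ)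
    (C : Matrix (Fin k) (Fin n) ℝ) (L : Fin m → Fin n) :
    ∃ α, (∀ i, twistor Z (C * Z) (Fin.snoc L i) = (Z *ᵥ α) i) ∧ C *ᵥ (Z *ᵥ α) = 0 ∧
      ∀ b, (Z *ᵥ α) (L b) = 0 := by
  obtain ⟨α, hα⟩ := exists_det_twistorMatrix_snoc_eq_dotProduct (C * Z) fun b => Z (L b)
  have hw : ∀ i, twistor Z (C * Z) (Fin.snoc L i) = (Z *ᵥ α) i := fun i => by
    rw [twistor_snoc, hα]
    rfl
  refine ⟨α, hw, ?_, fun b => ?_⟩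
  · funext a
    rw [mulVec_mulVec]
    exact (hα _).symm.trans (det_twistorMatrix_snoc_of_mem _ _ (Or.inl ⟨a, rfl⟩))
  · rw [← hw, twistor_snoc]
    exact det_twistorMatrix_snoc_of_mem _ _ (Or.inr ⟨b, rfl⟩)

end Twistor

theorem stmt13_general (k r n : ℕ) (hmn : k + (2 * r + 1) ≤ n)
    (Z : Matrix (Fin n) (Fin (k + (2 * r + 1))) ℝ) (hZ : PosMaximalMinors Z)
    (C : Matrix (Fin k) (Fin n) ℝ) (hC : PosRowMinors C)
    (B : Fin (2 * r) → Fin n) (hB : StrictMono B) (hpair : ConsecPairs B)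
    (i0 im ip : Fin n)
    (hmi : im < i0) (hip : i0 < ip)
    (h0B : ∀ a, B a ≠ i0) (hmB : ∀ a, B a ≠ im) (hpB : ∀ a, B a ≠ ip)
    (hmax : ∀ j : Fin n, im < j → j < i0 → ∃ a, B a = j)
    (hmin : ∀ j : Fin n, i0 < j → j < ip → ∃ a, B a = j) :
    ¬ (twistor Z (C * Z) (Fin.snoc B i0) = 0 ∧
        0 < twistor Z (C * Z) (Fin.snoc B im) * twistor Z (C * Z) (Fin.snoc B ip)) := by
  rintro ⟨h0, hpos⟩
  obtain ⟨α, hw, hCw, hwB⟩ := exists_twistor_snoc_eq_mulVec Z C B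
  set w := Z *ᵥ α
  simp only [hw] at h0 hpos
  have hgap : ∀ x, im < x → x < ip → w x = 0 := fun x h1 h2 => by
    rcases lt_trichotomy x i0 with h | rfl | h
    · obtain ⟨a, rfl⟩ := hmax x h1 h
      exact hwB a
    · exact h0
    · obtain ⟨a, rfl⟩ := hmin x h h2
      exact hwB a
  obtain ⟨ε, S, hSk, hS⟩ :=
    hC.exists_strictSignAlternatesOn (by omega) (fun h => by simp [h] at hpos) hCw
  have hε := hS.ne_zero (card_pos.mp (by omega))
  obtain ⟨S₁, hS₁card, hS₁sub, hS₁⟩ := hS.exists_signAlternatesOn_of_gap hε hmi hip hpos hgap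
  have hS₁B : ∀ x ∈ S₁, ∀ a, B a ≠ x := fun x hx a hBx => by
    rcases mem_union.mp (hS₁sub hx) with hxS | hx
    · exact hS.apply_ne_zero hxS (hBx ▸ hwB a)
    · simp only [mem_insert, mem_singleton] at hx
      rcases hx with rfl | rfl | rfl
      exacts [hmB a hBx, h0B a hBx, hpB a hBx]
  obtain ⟨halt, hcard⟩ := hS₁.union_image_of_consecPairs hpair hB (even_two_mul r) hwB hS₁B
  have hα0 := hZ.eq_zero_of_signAlternatesOn hε (by omega) halt
  simp [w, hα0] at hpos

/-- Forbidden vanishing: for `m = 2r+1` odd, `Z`, `C` with positive maximal minors,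
`Y = C Z`, `B` a pair list of length `2r`, and `i₀ ∈ [n] ∖ B` with `2 ≤ i₀ ≤ n−1`
(1-indexed; `1 ≤ i₀ ≤ n−2` in 0-indexed `Fin n`), let `i₀⁻` (resp. `i₀⁺`) be its
predecessor (resp. successor) in `[n] ∖ B`.  Then it is impossible that `⟨Y,B,i₀⟩ = 0`
while `⟨Y,B,i₀⁻⟩` and `⟨Y,B,i₀⁺⟩` are nonzero of the same sign. -/
theorem stmt13 (k r n : ℕ) (hmn : k + (2 * r + 1) ≤ n)
    (Z : Matrix (Fin n) (Fin (k + (2 * r + 1))) ℝ) (hZ : PosMaximalMinors Z)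
    (C : Matrix (Fin k) (Fin n) ℝ) (hC : PosRowMinors C)
    (B : Fin (2 * r) → Fin n) (hB : StrictMono B) (hpair : ConsecPairs B)
    (i0 im ip : Fin n)
    (h1 : 1 ≤ (i0 : ℕ)) (h2 : (i0 : ℕ) ≤ n - 2)
    (hmi : im < i0) (hip : i0 < ip)
    (h0B : ∀ a, B a ≠ i0) (hmB : ∀ a, B a ≠ im) (hpB : ∀ a, B a ≠ ip)
    (hmax : ∀ j : Fin n, im < j → j < i0 → ∃ a, B a = j)
    (hmin : ∀ j : Fin n, i0 < j → j < ip → ∃ a, B a = j) :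
    ¬ (twistor Z (C * Z) (Fin.snoc B i0) = 0 ∧
        0 < twistor Z (C * Z) (Fin.snoc B im) * twistor Z (C * Z) (Fin.snoc B ip)) :=
  stmt13_general k r n hmn Z hZ C hC B hB hpair i0 im ip hmi hip h0B hmB hpB hmax hmin
end
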